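/- Let Λ > 0, K ≥ 1, u₁ > 0, and set α := (1/2)√(ΛK/3), r_c⁻ := √(3/(ΛK)), so that 1/(2α) = r_c⁻. Let r : [0,u₁] → ℝ be differentiable with −(1/2)(K − (Λ/3) r(u)²) ≤ r'(u) ≤ −(1/2)(1 − (ΛK/3) r(u)²) for all u ∈ [0,u₁], and suppose 0 ≤ r(u₁) =: r₁ < r_c⁻. Define c⁻ := u₁ + (1/α)·artanh(2α r₁) and c⁺ := u₁ + (1/α)·artanh(2α r₁/K). Then for every u ∈ [0,u₁], (1/(2α))·tanh(α(c⁻ − u)) ≤ r(u) ≤ (K/(2α))·tanh(α(c⁺ − u)). -/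

import Mathlib

/-!
Both bounds come from the backward comparison principle for the Riccati equations
`y' = -1/2 + (ΛK/6) y²` and `y' = -K/2 + (Λ/6) y²`: the profile `β tanh (α (c - u))` solves
`y' = -αβ + (α/β) y²`, so `β = 1/(2α)` gives an exact solution of the first equation and
`β = K/(2α)` one of the second, and `c⁻`, `c⁺` are chosen so that these solutions take the
value `r₁` at `u₁`. For the comparison, the difference `w = f - h` of a supersolution `f` and a
subsolution `h` of `y' = A + B y²` satisfies `w' ≥ B (f + h) w`; with `L` a bound for `|B (f + h)|`, the product `exp (L u) w` is
nondecreasing wherever `w > 0`, so `w ≤ 0` at `u₁` forces `w ≤ 0` before `u₁`.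
-/

noncomputable section

open Real Set

def artanh (y : ℝ) : ℝ := (1 / 2) * Real.log ((1 + y) / (1 - y))

theorem nonpos_of_deriv_nonneg_where_pos {ψ ψ' : ℝ → ℝ} {a b : ℝ}
    (hc : ContinuousOn ψ (Icc a b)) (hd : ∀ t ∈ Ioo a b, HasDerivAt ψ (ψ' t) t)
    (hpos : ∀ t ∈ Ioo a b, 0 < ψ t → 0 ≤ ψ' t) (hb : ψ b ≤ 0) :
    ∀ t ∈ Icc a b, ψ t ≤ 0 := by
  intro t₀ ht₀
  by_contra! hψt₀
  set S := Icc t₀ b ∩ ψ ⁻¹' Iic 0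
  have hbdd : BddBelow S := ⟨t₀, fun t ht => ht.1.1⟩
  have hS : IsClosed S :=
    (hc.mono (Icc_subset_Icc_left ht₀.1)).preimage_isClosed_of_isClosed isClosed_Icc isClosed_Iic
  have hs : sInf S ∈ S := hS.csInf_mem ⟨b, ⟨ht₀.2, le_rfl⟩, hb⟩ hbdd
  obtain ⟨⟨ht₀s, hsb⟩, hψs⟩ := hs
  have hpos_before : ∀ t ∈ Ico t₀ (sInf S), 0 < ψ t := fun t ht => by
    by_contra! h
    exact (csInf_le hbdd ⟨⟨ht.1, ht.2.le.trans hsb⟩, h⟩).not_gt ht.2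
  have hsub : Ioo t₀ (sInf S) ⊆ Ioo a b := Ioo_subset_Ioo ht₀.1 hsb
  have hmono : MonotoneOn ψ (Icc t₀ (sInf S)) := by
    refine monotoneOn_of_hasDerivWithinAt_nonneg (f' := ψ') (convex_Icc _ _)
      (hc.mono (Icc_subset_Icc ht₀.1 hsb)) (fun t ht => ?_) (fun t ht => ?_)
    · rw [interior_Icc] at ht ⊢
      exact (hd t (hsub ht)).hasDerivWithinAt
    · rw [interior_Icc] at ht
      exact hpos t (hsub ht) (hpos_before t ⟨ht.1.le, ht.2⟩)
  have := hmono ⟨le_rfl, ht₀s⟩ ⟨ht₀s, le_rfl⟩ ht₀s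
  linarith [show ψ (sInf S) ≤ 0 from hψs]

theorem nonpos_of_deriv_ge_mul_where_pos {w w' p : ℝ → ℝ} {a b : ℝ}
    (hw : ∀ t ∈ Icc a b, HasDerivWithinAt w (w' t) (Icc a b) t) (hp : ContinuousOn p (Icc a b))
    (hw' : ∀ t ∈ Icc a b, 0 < w t → p t * w t ≤ w' t) (hb : w b ≤ 0) :
    ∀ t ∈ Icc a b, w t ≤ 0 := by
  obtain ⟨L, hL⟩ := isCompact_Icc.exists_bound_of_continuousOn hp
  have hψ : ∀ t ∈ Ioo a b,
      HasDerivAt (fun t => exp (L * t) * w t) (exp (L * t) * (w' t + L * w t)) t := by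
    intro t ht
    have hwt := (hw t (Ioo_subset_Icc_self ht)).hasDerivAt (Icc_mem_nhds ht.1 ht.2)
    refine (((hasDerivAt_id t).const_mul L).exp.mul hwt).congr_deriv ?_
    simp only [id, mul_one]
    ring
  have hψ_nonpos := nonpos_of_deriv_nonneg_where_pos
    ((continuous_exp.comp (continuous_const.mul continuous_id)).continuousOn.mul
      fun t ht => (hw t ht).continuousWithinAt)
    hψ
    (fun t ht hψt => by
      have ht' := Ioo_subset_Icc_self ht
      have hwt : 0 < w t := pos_of_mul_pos_right hψt (exp_pos _).le
      have hpL : -L ≤ p t := neg_le_of_abs_le (hL t ht')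
      have : 0 ≤ w' t + L * w t := by nlinarith [hw' t ht' hwt]
      exact mul_nonneg (exp_pos _).le this)
    (mul_nonpos_of_nonneg_of_nonpos (exp_pos _).le hb)
  exact fun t ht => nonpos_of_mul_nonpos_right (hψ_nonpos t ht) (exp_pos _)

theorem le_of_backward_comparison_quadratic {A B a b : ℝ} {f f' h h' : ℝ → ℝ}
    (hf : ∀ t ∈ Icc a b, HasDerivWithinAt f (f' t) (Icc a b) t)
    (hh : ∀ t ∈ Icc a b, HasDerivWithinAt h (h' t) (Icc a b) t)
    (hf' : ∀ t ∈ Icc a b, A + B * f t ^ 2 ≤ f' t) (hh' : ∀ t ∈ Icc a b, h' t ≤ A + B * h t ^ 2)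
    (hb : f b ≤ h b) : ∀ t ∈ Icc a b, f t ≤ h t := by
  have hfc : ContinuousOn f (Icc a b) := fun t ht => (hf t ht).continuousWithinAt
  have hhc : ContinuousOn h (Icc a b) := fun t ht => (hh t ht).continuousWithinAt
  have key := nonpos_of_deriv_ge_mul_where_pos (w := fun t => f t - h t)
    (p := fun t => B * (f t + h t)) (fun t ht => (hf t ht).sub (hh t ht))
    (continuousOn_const.mul (hfc.add hhc))
    (fun t ht _ => by linear_combination hf' t ht + hh' t ht) (sub_nonpos.2 hb)
  exact fun t ht => sub_nonpos.1 (key t ht)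

theorem Real.hasDerivAt_tanh (x : ℝ) : HasDerivAt tanh (1 - tanh x ^ 2) x := by
  have hc : cosh x ≠ 0 := (cosh_pos x).ne'
  rw [show tanh = fun x => sinh x / cosh x from funext tanh_eq_sinh_div_cosh]
  refine ((hasDerivAt_sinh x).div (hasDerivAt_cosh x) hc).congr_deriv ?_
  field_simp

theorem hasDerivAt_const_mul_tanh_mul_sub (α β c u : ℝ) (hβ : β ≠ 0) :
    HasDerivAt (fun u => β * tanh (α * (c - u)))
      (-(α * β) + α / β * (β * tanh (α * (c - u))) ^ 2) u := by
  have hlin : HasDerivAt (fun u => α * (c - u)) (-α) u := by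
    simpa using ((hasDerivAt_id u).const_sub c).const_mul α
  refine (((Real.hasDerivAt_tanh _).comp u hlin).const_mul β).congr_deriv ?_
  field_simp
  ring

theorem tanh_mul_add_one_div_mul_artanh_sub {α : ℝ} (hα : α ≠ 0) (b : ℝ) {y : ℝ}
    (hy : y ∈ Ioo (-1 : ℝ) 1) : tanh (α * (b + 1 / α * _root_.artanh y - b)) = y := by
  have : _root_.artanh y = Real.artanh y := (Real.artanh_eq_half_log (Ioo_subset_Icc_self hy)).symm
  rw [show α * (b + 1 / α * _root_.artanh y - b) = _root_.artanh y by field_simp; ring, this,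
    Real.tanh_artanh hy]

theorem mul_tanh_le_of_deriv_le {α β y a b : ℝ} {r r' : ℝ → ℝ} (hα : α ≠ 0) (hβ : β ≠ 0)
    (hr : ∀ t ∈ Icc a b, HasDerivWithinAt r (r' t) (Icc a b) t)
    (hr' : ∀ t ∈ Icc a b, r' t ≤ -(α * β) + α / β * r t ^ 2)
    (hy : y ∈ Ioo (-1 : ℝ) 1) (hb : r b = β * y) :
    ∀ t ∈ Icc a b, β * tanh (α * (b + 1 / α * _root_.artanh y - t)) ≤ r t :=
  le_of_backward_comparison_quadratic
    (fun t _ => (hasDerivAt_const_mul_tanh_mul_sub α _ _ t hβ).hasDerivWithinAt) hr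
    (fun _ _ => le_rfl) hr' (by rw [tanh_mul_add_one_div_mul_artanh_sub hα b hy, hb])

theorem le_mul_tanh_of_le_deriv {α β y a b : ℝ} {r r' : ℝ → ℝ} (hα : α ≠ 0) (hβ : β ≠ 0)
    (hr : ∀ t ∈ Icc a b, HasDerivWithinAt r (r' t) (Icc a b) t)
    (hr' : ∀ t ∈ Icc a b, -(α * β) + α / β * r t ^ 2 ≤ r' t)
    (hy : y ∈ Ioo (-1 : ℝ) 1) (hb : r b = β * y) :
    ∀ t ∈ Icc a b, r t ≤ β * tanh (α * (b + 1 / α * _root_.artanh y - t)) :=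
  le_of_backward_comparison_quadratic hr
    (fun t _ => (hasDerivAt_const_mul_tanh_mul_sub α _ _ t hβ).hasDerivWithinAt)
    hr' (fun _ _ => le_rfl) (by rw [tanh_mul_add_one_div_mul_artanh_sub hα b hy, hb])

theorem characteristics_local_region_general
    (Λ K u₁ : ℝ) (hΛ : 0 < Λ) (hK : 1 ≤ K)
    (r r' : ℝ → ℝ)
    (hd : ∀ u ∈ Icc (0:ℝ) u₁, HasDerivWithinAt r (r' u) (Icc 0 u₁) u)
    (hlow : ∀ u ∈ Icc (0:ℝ) u₁, -(1 / 2) * (K - Λ / 3 * r u ^ 2) ≤ r' u)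
    (hhigh : ∀ u ∈ Icc (0:ℝ) u₁, r' u ≤ -(1 / 2) * (1 - Λ * K / 3 * r u ^ 2))
    (hr₁0 : 0 ≤ r u₁) (hr₁ : r u₁ < Real.sqrt (3 / (Λ * K)))
    (α cm cp : ℝ)
    (hα : α = (1 / 2) * Real.sqrt (Λ * K / 3))
    (hcm : cm = u₁ + (1 / α) * _root_.artanh (2 * α * r u₁))
    (hcp : cp = u₁ + (1 / α) * _root_.artanh (2 * α * r u₁ / K)) :
    ∀ u ∈ Icc (0:ℝ) u₁,
      (1 / (2 * α)) * Real.tanh (α * (cm - u)) ≤ r u ∧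
      r u ≤ (K / (2 * α)) * Real.tanh (α * (cp - u)) := by
  have hK0 : 0 < K := by linarith
  have hΛK : 0 < Λ * K / 3 := by positivity
  have hα0 : 0 < α := by rw [hα]; have := sqrt_pos.2 hΛK; linarith
  have hα2 : (2 * α) ^ 2 = Λ * K / 3 := by rw [hα]; linear_combination sq_sqrt hΛK.le
  have hrc : sqrt (3 / (Λ * K)) = 1 / (2 * α) := by rw [← inv_div, sqrt_inv, hα]; ring
  have hy : 2 * α * r u₁ ∈ Ioo (-1 : ℝ) 1 := by
    rw [hrc, lt_div_iff₀ (by positivity)] at hr₁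
    exact ⟨by nlinarith, by linarith⟩
  have hyK : 2 * α * r u₁ / K ∈ Ioo (-1 : ℝ) 1 :=
    ⟨by rw [lt_div_iff₀ hK0]; nlinarith [hy.1], by rw [div_lt_one hK0]; linarith [hy.2]⟩
  have hcoeff_high : ∀ x : ℝ,
      -(α * (1 / (2 * α))) + α / (1 / (2 * α)) * x ^ 2 = -(1 / 2) * (1 - Λ * K / 3 * x ^ 2) :=
    fun x => by field_simp; linear_combination 3 * x ^ 2 * hα2
  have hcoeff_low : ∀ x : ℝ,
      -(α * (K / (2 * α))) + α / (K / (2 * α)) * x ^ 2 = -(1 / 2) * (K - Λ / 3 * x ^ 2) :=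
    fun x => by field_simp; linear_combination 3 * x ^ 2 * hα2
  subst hcm hcp
  intro u hu
  exact ⟨mul_tanh_le_of_deriv_le hα0.ne' (by positivity) hd
      (fun t ht => by rw [hcoeff_high]; exact hhigh t ht) hy (by field_simp) u hu,
    le_mul_tanh_of_le_deriv hα0.ne' (by positivity) hd
      (fun t ht => by rw [hcoeff_low]; exact hlow t ht) hyK (by field_simp) u hu⟩

/-- Bounds for characteristics in the local region `r₁ < r_c⁻`:
a differentiable `r` with `−(1/2)(K − (Λ/3)r²) ≤ r' ≤ −(1/2)(1 − (ΛK/3)r²)` on `[0,u₁]`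
and `0 ≤ r(u₁) = r₁ < r_c⁻ = √(3/(ΛK))` is sandwiched between explicit tanh profiles,
with `α = (1/2)√(ΛK/3)`, `c⁻ = u₁ + artanh(2αr₁)/α`, `c⁺ = u₁ + artanh(2αr₁/K)/α`. -/
theorem characteristics_local_region
    (Λ K u₁ : ℝ) (hΛ : 0 < Λ) (hK : 1 ≤ K) (hu : 0 < u₁)
    (r r' : ℝ → ℝ)
    (hd : ∀ u ∈ Icc (0:ℝ) u₁, HasDerivWithinAt r (r' u) (Icc 0 u₁) u)
    (hlow : ∀ u ∈ Icc (0:ℝ) u₁, -(1 / 2) * (K - Λ / 3 * r u ^ 2) ≤ r' u)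
    (hhigh : ∀ u ∈ Icc (0:ℝ) u₁, r' u ≤ -(1 / 2) * (1 - Λ * K / 3 * r u ^ 2))
    (hr₁0 : 0 ≤ r u₁) (hr₁ : r u₁ < Real.sqrt (3 / (Λ * K)))
    (α cm cp : ℝ)
    (hα : α = (1 / 2) * Real.sqrt (Λ * K / 3))
    (hcm : cm = u₁ + (1 / α) * _root_.artanh (2 * α * r u₁))
    (hcp : cp = u₁ + (1 / α) * _root_.artanh (2 * α * r u₁ / K)) :
    ∀ u ∈ Icc (0:ℝ) u₁,
      (1 / (2 * α)) * Real.tanh (α * (cm - u)) ≤ r u ∧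
      r u ≤ (K / (2 * α)) * Real.tanh (α * (cp - u)) :=
  characteristics_local_region_general Λ K u₁ hΛ hK r r' hd hlow hhigh hr₁0 hr₁ α cm cp hα hcm hcp
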